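/- Let a and n be integers with a ≥ 7, a ≡ 3 (mod 4), n ≥ 3, n ≡ 0 (mod 4), and a(n−2) ≥ 8n−2. Then the Frobenius number of the triple {S_{a,n}, S_{a,n+1}, S_{a,n+2}} equals (4n−2)·S_{a,n+1} + ((a(n−2)−2)/4)·S_{a,n+2} − S_{a,n}. -/

import Mathlib

/-- The 2-step star number `S_{a,n} = a·n·(n−2) + 1`. -/
def twoStepStar (a n : ℕ) : ℕ := a * n * (n - 2) + 1

/-!
Put `A = S_{a,n}`, `B = S_{a,n+1} = A + a(2n-1)`, `C = S_{a,n+2} = A + 4an` and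
`a(n-2) = 4k+2`, so that `A = 4nk + 2n + 1`. Since `qB + rC = (q+r)A + a((2n-1)q + 4nr)` and
`a` is a unit modulo `A`, the class of `qB + rC` modulo `A` is that of `a((2n-1)q + 4nr)`.
As `(2n-1)² ≡ 1 (mod 4n)`, `(2n-1)q + 4nr = ν` forces `q ≡ (2n-1)ν (mod 4n)`. From this one
sees that the `A` pairs with `q ≤ 4n-2, r ≤ k` or `q = 4n-1, r ≤ k-2n+1` meet every class
modulo `A`, and that `(4n-2)B + kC`, the largest of their values, is the least element of its
class. By Selmer's formula the Frobenius number is `(4n-2)B + kC - A`.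
-/

theorem Int.ModEq.le_of_nonneg_of_lt {q c m : ℤ} (h : q ≡ c [ZMOD m]) (hq : 0 ≤ q)
    (hc : c < m) : c ≤ q := by
  obtain ⟨t, ht⟩ := h.symm.dvd
  by_contra! hqc
  rcases le_or_gt m 0 with hm | hm
  · linarith
  · have ht' : t ≤ -1 := by nlinarith
    nlinarith

/-- Selmer's formula: `M` is the largest element of the Apéry set of `s` with respect to `A`. -/
theorem frobeniusNumber_insert_of_modEq {A M : ℕ} {s : Set ℕ} (hA : 0 < A) (hAM : A ≤ M)
    (hmin : ∀ y ∈ AddSubmonoid.closure s, y ≡ M [MOD A] → M ≤ y)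
    (hcover : ∀ x, ∃ y ∈ AddSubmonoid.closure s, y ≤ M ∧ y ≡ x [MOD A]) :
    FrobeniusNumber (M - A) (insert A s) := by
  have mem_iff : ∀ x, x ∈ AddSubmonoid.closure (insert A s) ↔
      ∃ t, ∃ y ∈ AddSubmonoid.closure s, t * A + y = x := by
    intro x
    simp only [Set.insert_eq, AddSubmonoid.closure_union, AddSubmonoid.mem_sup,
      AddSubmonoid.mem_closure_singleton, exists_exists_eq_and, smul_eq_mul]
  refine frobeniusNumber_iff.2 ⟨fun hM => ?_, fun x hx => (mem_iff x).2 ?_⟩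
  · obtain ⟨t, y, hy, hyM⟩ := (mem_iff _).1 hM
    have : M ≤ y := hmin y hy <| by
      rw [show M = y + A * (t + 1) by rw [← Nat.sub_add_cancel hAM, ← hyM]; ring]
      exact (Nat.add_mul_mod_self_left y A (t + 1)).symm
    omega
  · obtain ⟨y, hy, hyM, hyx⟩ := hcover x
    have hyx' : y ≤ x := hyx.le_of_lt_add (by omega)
    obtain ⟨t, ht⟩ := (Nat.modEq_iff_dvd' hyx').mp hyx
    exact ⟨t, y, hy, by rw [mul_comm, ← ht]; omega⟩

section

variable {n k q r N : ℤ}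

theorem modEq_of_two_mul_sub_one_mul_add_four_mul_eq (h : (2 * n - 1) * q + 4 * n * r = N) :
    q ≡ (2 * n - 1) * N [ZMOD 4 * n] :=
  Int.modEq_iff_dvd.2 ⟨(n - 1) * q + (2 * n - 1) * r, by rw [← h]; ring⟩

/-- `8n² - 10n + 1` is the Frobenius number of `{2n - 1, 4n}`. -/
theorem two_mul_sub_one_mul_add_four_mul_ne (hn : 1 ≤ n) (hq : 0 ≤ q) (hr : 0 ≤ r) :
    (2 * n - 1) * q + 4 * n * r ≠ 8 * n ^ 2 - 10 * n + 1 := by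
  intro h
  have hq' : 4 * n - 1 ≤ q := by
    refine (modEq_of_two_mul_sub_one_mul_add_four_mul_eq h |>.trans ?_).le_of_nonneg_of_lt hq
      (by linarith)
    exact Int.modEq_iff_dvd.2 ⟨-(4 * n ^ 2 - 7 * n + 2), by ring⟩
  nlinarith

theorem le_add_of_two_mul_sub_one_mul_add_four_mul_eq (hn : 1 ≤ n) (hq : 0 ≤ q)
    (h : (2 * n - 1) * q + 4 * n * r = (2 * n - 1) * (4 * n - 2) + 4 * n * k) :
    4 * n - 2 + k ≤ q + r := by
  have hq' : 4 * n - 2 ≤ q := by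
    refine (modEq_of_two_mul_sub_one_mul_add_four_mul_eq h |>.trans ?_).le_of_nonneg_of_lt hq
      (by linarith)
    exact Int.modEq_iff_dvd.2 ⟨-((n - 1) * (4 * n - 2) + (2 * n - 1) * k), by ring⟩
  nlinarith

end

namespace StarTriple

variable {n k a A B C q r : ℤ}

/-- Indices `(q, r)` of the Apéry set of `{A, A + a(2n-1), A + 4an}` with respect to
`A = 4nk + 2n + 1`; there are exactly `A` of them. -/
def AperyIndex (n k q r : ℤ) : Prop :=
  0 ≤ q ∧ 0 ≤ r ∧ (q ≤ 4 * n - 2 ∧ r ≤ k ∨ q = 4 * n - 1 ∧ r ≤ k - 2 * n + 1)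

theorem weight_eq (hB : B = A + a * (2 * n - 1)) (hC : C = A + 4 * a * n) :
    q * B + r * C = (q + r) * A + a * ((2 * n - 1) * q + 4 * n * r) := by
  rw [hB, hC]; ring

theorem le_of_modEq (hn : 1 ≤ n) (hk : 2 * n - 1 ≤ k) (ha : 0 < a)
    (hA : A = 4 * n * k + 2 * n + 1) (hB : B = A + a * (2 * n - 1)) (hC : C = A + 4 * a * n)
    (hcop : IsCoprime a A) (hq : 0 ≤ q) (hr : 0 ≤ r)
    (h : q * B + r * C ≡ (4 * n - 2) * B + k * C [ZMOD A]) :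
    (4 * n - 2) * B + k * C ≤ q * B + r * C := by
  have hA0 : 0 < A := by nlinarith
  obtain ⟨s, hs⟩ :
      A ∣ (2 * n - 1) * (4 * n - 2) + 4 * n * k - ((2 * n - 1) * q + 4 * n * r) := by
    have hdvd := Int.modEq_iff_dvd.1 h
    rw [weight_eq hB hC, weight_eq hB hC, add_sub_add_comm, ← sub_mul, ← mul_sub] at hdvd
    exact hcop.symm.dvd_of_dvd_mul_left ((dvd_add_right (dvd_mul_left A _)).1 hdvd)
  suffices 4 * n - 2 + k ≤ q + r - a * s by
    rw [weight_eq hB hC, weight_eq hB hC]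
    nlinarith [mul_nonneg (sub_nonneg.2 this) hA0.le]
  have hN : 0 ≤ (2 * n - 1) * q + 4 * n * r := by nlinarith
  -- `hs` says `(2n-1)q + 4nr = A + 8n² - 10n + 1 - sA`.
  obtain hneg | rfl | rfl | hpos : s < 0 ∨ s = 0 ∨ s = 1 ∨ 1 < s := by omega
  · nlinarith [mul_le_mul_of_nonneg_left (show s ≤ -1 by omega) hA0.le,
      mul_le_mul_of_nonneg_left (show s ≤ -1 by omega) ha.le,
      mul_le_mul_of_nonneg_left hk (show 0 ≤ n by linarith)]
  · simpa using le_add_of_two_mul_sub_one_mul_add_four_mul_eq hn hq (by linarith)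
  · exact absurd (by rw [hA] at hs; linarith) (two_mul_sub_one_mul_add_four_mul_ne hn hq hr)
  · nlinarith

theorem weight_le_of_aperyIndex (hn : 1 ≤ n) (hB : 0 ≤ B) (hBC : B ≤ C)
    (h : AperyIndex n k q r) : q * B + r * C ≤ (4 * n - 2) * B + k * C := by
  obtain ⟨-, -, ⟨hq, hr⟩ | ⟨rfl, hr⟩⟩ := h
  · nlinarith [mul_le_mul_of_nonneg_right hq hB, mul_le_mul_of_nonneg_right hr (hB.trans hBC)]
  · nlinarith [mul_le_mul_of_nonneg_right hr (hB.trans hBC)]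

theorem exists_aperyIndex_modEq (hn : 1 ≤ n) (hk : 2 * n - 1 ≤ k)
    (hA : A = 4 * n * k + 2 * n + 1) {ν : ℤ} (hν : 0 ≤ ν) (hνA : ν < A) :
    ∃ q r, AperyIndex n k q r ∧ (2 * n - 1) * q + 4 * n * r ≡ ν [ZMOD A] := by
  set q₀ := (2 * n - 1) * ν % (4 * n)
  have hq₀ : 0 ≤ q₀ := Int.emod_nonneg _ (by omega)
  have hq₀n : q₀ < 4 * n := Int.emod_lt_of_pos _ (by omega)
  set t := (2 * n - 1) * ((2 * n - 1) * ν / (4 * n)) - (n - 1) * ν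
  have ht : (2 * n - 1) * q₀ + 4 * n * t = ν := by
    linear_combination (2 * n - 1) * Int.emod_add_mul_ediv ((2 * n - 1) * ν) (4 * n)
  rcases le_or_gt 0 t with ht0 | ht0
  · refine ⟨q₀, t, ⟨hq₀, ht0, ?_⟩, by rw [ht]⟩
    rcases lt_or_eq_of_le (show q₀ ≤ 4 * n - 1 by omega) with hlt | heq
    · exact .inl ⟨by omega, by nlinarith⟩
    · exact .inr ⟨heq, by nlinarith⟩
  · refine ⟨q₀ - 1, t + k + 1,
      ⟨by nlinarith, by nlinarith, .inl ⟨by omega, by omega⟩⟩, ?_⟩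
    rw [show (2 * n - 1) * (q₀ - 1) + 4 * n * (t + k + 1) = ν + A by
      linear_combination ht - hA]
    exact Int.add_modEq_right

theorem exists_le_modEq (hn : 1 ≤ n) (hk : 2 * n - 1 ≤ k) (ha : 0 ≤ a)
    (hA : A = 4 * n * k + 2 * n + 1) (hB : B = A + a * (2 * n - 1)) (hC : C = A + 4 * a * n)
    (hcop : IsCoprime a A) (x : ℤ) :
    ∃ q r, 0 ≤ q ∧ 0 ≤ r ∧ q * B + r * C ≤ (4 * n - 2) * B + k * C ∧
      q * B + r * C ≡ x [ZMOD A] := by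
  obtain ⟨c, d, hcd⟩ := hcop
  have hA0 : 0 < A := by nlinarith
  obtain ⟨q, r, hqr, hmod⟩ := exists_aperyIndex_modEq hn hk hA
    (Int.emod_nonneg (c * x) hA0.ne') (Int.emod_lt_of_pos (c * x) hA0)
  refine ⟨q, r, hqr.1, hqr.2.1,
    weight_le_of_aperyIndex hn (by nlinarith) (by nlinarith) hqr, ?_⟩
  calc q * B + r * C = A * (q + r) + a * ((2 * n - 1) * q + 4 * n * r) := by
        rw [weight_eq hB hC]; ring
    _ ≡ a * ((2 * n - 1) * q + 4 * n * r) [ZMOD A] := Int.modulus_mul_add_modEq_iff.2 rfl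
    _ ≡ a * (c * x) [ZMOD A] := (hmod.trans (Int.mod_modEq _ _)).mul_left a
    _ = A * (-d * x) + x := by linear_combination x * hcd
    _ ≡ x [ZMOD A] := Int.modulus_mul_add_modEq_iff.2 rfl

end StarTriple

theorem frobeniusNumber_starTriple {n k a A B C : ℕ} (hn : 1 ≤ n) (hk : 2 * n - 1 ≤ k)
    (ha : 0 < a) (hA : A = 4 * n * k + 2 * n + 1) (hB : B = A + a * (2 * n - 1))
    (hC : C = A + 4 * a * n) (hcop : Nat.Coprime a A) :
    FrobeniusNumber ((4 * n - 2) * B + k * C - A) {A, B, C} := by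
  have hnZ : (1 : ℤ) ≤ n := by exact_mod_cast hn
  have hkZ : 2 * (n : ℤ) - 1 ≤ k := by omega
  have hAZ : (A : ℤ) = 4 * n * k + 2 * n + 1 := by rw [hA]; push_cast; ring
  have hBZ : (B : ℤ) = A + a * (2 * n - 1) := by
    rw [hB]; push_cast [Nat.cast_sub (by omega : 1 ≤ 2 * n)]; ring
  have hCZ : (C : ℤ) = A + 4 * a * n := by rw [hC]; push_cast; ring
  have hcopZ : IsCoprime (a : ℤ) A := Nat.isCoprime_iff_coprime.2 hcop
  have hMZ : (((4 * n - 2) * B + k * C : ℕ) : ℤ) = (4 * n - 2) * B + k * C := by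
    push_cast [Nat.cast_sub (by omega : 2 ≤ 4 * n)]; ring
  refine frobeniusNumber_insert_of_modEq (by omega) (by nlinarith)
    (fun y hy hyM => ?_) (fun x => ?_)
  · obtain ⟨q, r, rfl⟩ := (AddSubmonoid.mem_closure_pair _ _ _).1 hy
    have := StarTriple.le_of_modEq hnZ hkZ (by exact_mod_cast ha) hAZ hBZ hCZ hcopZ
      (Int.natCast_nonneg q) (Int.natCast_nonneg r)
      (by rw [← hMZ]; exact_mod_cast Int.natCast_modEq_iff.2 hyM)
    rw [← hMZ] at this
    simp only [smul_eq_mul]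
    exact_mod_cast this
  · obtain ⟨q, r, hq, hr, hle, hmod⟩ :=
      StarTriple.exists_le_modEq hnZ hkZ (Int.natCast_nonneg a) hAZ hBZ hCZ hcopZ x
    lift q to ℕ using hq
    lift r to ℕ using hr
    rw [← hMZ] at hle
    exact ⟨q * B + r * C, (AddSubmonoid.mem_closure_pair _ _ _).2 ⟨q, r, rfl⟩,
      by exact_mod_cast hle, Int.natCast_modEq_iff.1 (by exact_mod_cast hmod)⟩

section

variable {a n : ℕ}

theorem twoStepStar_eq_of_mul_sub_two_eq {k : ℕ} (hk : a * (n - 2) = 4 * k + 2) :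
    twoStepStar a n = 4 * n * k + 2 * n + 1 := by
  rw [twoStepStar, mul_right_comm, hk]; ring

theorem twoStepStar_add_one (hn : 2 ≤ n) :
    twoStepStar a (n + 1) = twoStepStar a n + a * (2 * n - 1) := by
  obtain ⟨m, rfl⟩ := Nat.exists_eq_add_of_le hn
  simp only [twoStepStar, show 2 + m + 1 - 2 = m + 1 by omega, show 2 + m - 2 = m by omega,
    show 2 * (2 + m) - 1 = 2 * m + 3 by omega]
  ring

theorem twoStepStar_add_two (hn : 2 ≤ n) :
    twoStepStar a (n + 2) = twoStepStar a n + 4 * a * n := by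
  obtain ⟨m, rfl⟩ := Nat.exists_eq_add_of_le hn
  simp only [twoStepStar, show 2 + m + 2 - 2 = m + 2 by omega, show 2 + m - 2 = m by omega]
  ring

theorem coprime_twoStepStar (a n : ℕ) : Nat.Coprime a (twoStepStar a n) := by
  rw [twoStepStar, mul_assoc, Nat.coprime_mul_left_add_right]
  exact Nat.coprime_one_right a

end

theorem frobenius_twoStepStar_three_zero_general (a n : ℕ) (ha4 : a % 4 = 3) (hn : 3 ≤ n) (hn4 : n % 4 = 0) (hbig : 8 * n - 2 ≤ a * (n - 2)) :
    ∃ g : ℕ,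
      FrobeniusNumber g
        {twoStepStar a n, twoStepStar a (n + 1), twoStepStar a (n + 2)} ∧
      (g : ℚ) = (4 * (n : ℚ) - 2) * twoStepStar a (n + 1) + (((a : ℚ) * ((n : ℚ) - 2) - 2) / 4) * twoStepStar a (n + 2) - twoStepStar a n := by
  have hn2 : 2 ≤ n := by omega
  have hmod : a * (n - 2) % 4 = 2 := by rw [Nat.mul_mod, ha4, show (n - 2) % 4 = 2 by omega]
  obtain ⟨k, hk⟩ : ∃ k, a * (n - 2) = 4 * k + 2 := ⟨a * (n - 2) / 4, by omega⟩
  have hB := twoStepStar_add_one (a := a) hn2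
  refine ⟨_, frobeniusNumber_starTriple (by omega) (by omega) (by omega)
    (twoStepStar_eq_of_mul_sub_two_eq hk) hB (twoStepStar_add_two hn2)
    (coprime_twoStepStar a n), ?_⟩
  have hkQ : ((a : ℚ) * ((n : ℚ) - 2) - 2) / 4 = k := by
    have := congrArg (Nat.cast (R := ℚ)) hk
    push_cast [Nat.cast_sub hn2] at this
    linarith
  have hle :
      twoStepStar a n ≤ (4 * n - 2) * twoStepStar a (n + 1) + k * twoStepStar a (n + 2) :=
    calc twoStepStar a n ≤ twoStepStar a (n + 1) := hB ▸ Nat.le_add_right _ _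
      _ ≤ (4 * n - 2) * twoStepStar a (n + 1) := Nat.le_mul_of_pos_left _ (by omega)
      _ ≤ _ := Nat.le_add_right _ _
  rw [hkQ, Nat.cast_sub hle]
  push_cast [Nat.cast_sub (by omega : 2 ≤ 4 * n)]
  ring

theorem frobenius_twoStepStar_three_zero (a n : ℕ) (ha : 7 ≤ a) (ha4 : a % 4 = 3) (hn : 3 ≤ n) (hn4 : n % 4 = 0) (hbig : 8 * n - 2 ≤ a * (n - 2)) :
    ∃ g : ℕ,
      FrobeniusNumber g
        {twoStepStar a n, twoStepStar a (n + 1), twoStepStar a (n + 2)} ∧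
      (g : ℚ) = (4 * (n : ℚ) - 2) * twoStepStar a (n + 1) + (((a : ℚ) * ((n : ℚ) - 2) - 2) / 4) * twoStepStar a (n + 2) - twoStepStar a n :=
  frobenius_twoStepStar_three_zero_general a n ha4 hn hn4 hbig
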